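/- Let μ be a centred probability measure on ℝ with no atoms and let π be a Rogers-admissible probability measure with marginal μ. Then for every l > 0, the second-marginal tail satisfies π(ℝ × [l, ∞)) ≤ μ({x ∈ ℝ : β_μ(x) ≥ l}); i.e. the probability that the second coordinate is at least l is bounded by the μ-mass of the set where the barycenter function is at least l, the bound attained by the Azéma–Yor joint law (the pushforward of μ under w ↦ (w, β_μ(w))). -/

import Mathlib

/-! For `c < l`, condition (iv) at level `l` and the marginal condition give
`(l - c) π(y ≥ l) ≤ ∫_{y ≥ l} (x - c) dπ ≤ ∫ (x - c)⁺ dμ = (β_μ(c) - c) μ[c, ∞)`,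
so `π(y ≥ l) ≤ μ[c, ∞)` whenever `β_μ(c) < l`. As `β_μ` is nondecreasing, `{β_μ ≥ l}` is an
upper set; letting `c` increase to its infimum `c₀` and using that `μ` has no atoms gives
`π(y ≥ l) ≤ μ[c₀, ∞) = μ(c₀, ∞) ≤ μ{β_μ ≥ l}`. -/

open MeasureTheory Set

noncomputable section

/-- The set `M = {(x,y) : y ≥ 0 and y ≥ x}`. -/
def MSet : Set (ℝ × ℝ) := {p : ℝ × ℝ | 0 ≤ p.2 ∧ p.1 ≤ p.2}

/-- A probability measure on `ℝ` is centred if the identity is integrable with mean `0`. -/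
def Centred (μ : Measure ℝ) : Prop :=
  Integrable (fun x : ℝ => x) μ ∧ (∫ x, x ∂μ) = 0

/-- Strict supermodularity of a bivariate function. -/
def StrictlySupermodular (F : ℝ × ℝ → ℝ) : Prop :=
  ∀ w₁ w₂ s₁ s₂ : ℝ, w₁ < w₂ → s₁ < s₂ →
    F (w₁, s₂) + F (w₂, s₁) < F (w₁, s₁) + F (w₂, s₂)

/-- `F` is serrated with ridge `a : ℝ → EReal`: for every `w`, `s ↦ F (w, s)` is
strictly increasing on `{s | s < a w}` and strictly decreasing on `{s | a w < s}`. -/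
def SerratedWithRidge (F : ℝ × ℝ → ℝ) (a : ℝ → EReal) : Prop :=
  ∀ w : ℝ,
    StrictMonoOn (fun s : ℝ => F (w, s)) {s : ℝ | (s : EReal) < a w} ∧
    StrictAntiOn (fun s : ℝ => F (w, s)) {s : ℝ | a w < (s : EReal)}

/-- Rogers' conditions for `π` to be the joint law of the terminal value and the
running maximum of a UI martingale started at `0` with terminal law `μ`. -/
def RogersAdmissible (μ : Measure ℝ) (π : Measure (ℝ × ℝ)) : Prop :=
  Integrable (fun p : ℝ × ℝ => p.1) π ∧
  (∫ p : ℝ × ℝ, p.1 ∂π) = 0 ∧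
  π MSetᶜ = 0 ∧
  (∀ s : ℝ, 0 ≤ s →
    s * (π {p : ℝ × ℝ | s ≤ p.2}).toReal ≤ ∫ p in {p : ℝ × ℝ | s ≤ p.2}, p.1 ∂π) ∧
  Measure.map Prod.fst π = μ

/-- The barycenter function of `μ`. -/
def barycenter (μ : Measure ℝ) (w : ℝ) : ℝ :=
  if 0 < (μ (Ici w)).toReal then (∫ x in Ici w, x ∂μ) / (μ (Ici w)).toReal else w

/-- `g(w) = min(β_μ(w), max(a(w), 0, w))`, the max computed in `EReal`. -/
def ridgeG (μ : Measure ℝ) (a : ℝ → EReal) (w : ℝ) : ℝ :=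
  (min ((barycenter μ w : ℝ) : EReal) (max (a w) (max (0 : EReal) ((w : ℝ) : EReal)))).toReal

section Barycenter

variable {μ : Measure ℝ}

lemma barycenter_of_measureReal_eq_zero {w : ℝ} (h : μ.real (Ici w) = 0) :
    barycenter μ w = w :=
  if_neg h.le.not_gt

variable [IsFiniteMeasure μ]

lemma setIntegral_Ici_eq_barycenter_mul (w : ℝ) :
    ∫ x in Ici w, x ∂μ = barycenter μ w * μ.real (Ici w) := by
  unfold barycenter
  split_ifs with h
  · exact (div_mul_cancel₀ _ h.ne').symm
  · have h0 : μ (Ici w) = 0 := by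
      rw [← measureReal_eq_zero_iff]; exact le_antisymm (not_lt.1 h) measureReal_nonneg
    rw [Measure.restrict_eq_zero.2 h0, integral_zero_measure, measureReal_def, h0]
    simp

variable (hint : Integrable (fun x : ℝ => x) μ)
include hint

lemma setIntegral_Ici_sub_eq (w b : ℝ) :
    ∫ x in Ici w, (x - b) ∂μ = (barycenter μ w - b) * μ.real (Ici w) := by
  rw [integral_sub hint.integrableOn (integrableOn_const (measure_ne_top _ _)),
    setIntegral_Ici_eq_barycenter_mul, setIntegral_const, smul_eq_mul]
  ring

lemma le_barycenter (w : ℝ) : w ≤ barycenter μ w := by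
  rcases measureReal_nonneg.eq_or_lt with h0 | hpos
  · exact (barycenter_of_measureReal_eq_zero h0.symm).ge
  · have hnonneg : 0 ≤ (barycenter μ w - w) * μ.real (Ici w) := by
      rw [← setIntegral_Ici_sub_eq hint]
      exact setIntegral_nonneg measurableSet_Ici fun x hx => sub_nonneg.2 hx
    exact sub_nonneg.1 (nonneg_of_mul_nonneg_left hnonneg hpos)

lemma monotone_barycenter : Monotone (barycenter μ) := by
  intro w₁ w₂ hw
  have hint_sub : Integrable (fun x : ℝ => x - barycenter μ w₂) μ := hint.sub (integrable_const _)
  have hdisj : Disjoint (Ico w₁ w₂) (Ici w₂) :=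
    Set.disjoint_left.2 fun x hx hx' => (not_le.2 hx.2) hx'
  have hneg : (barycenter μ w₁ - barycenter μ w₂) * μ.real (Ici w₁) ≤ 0 := by
    rw [← setIntegral_Ici_sub_eq hint, ← Ico_union_Ici_eq_Ici hw,
      setIntegral_union hdisj measurableSet_Ici hint_sub.integrableOn hint_sub.integrableOn,
      setIntegral_Ici_sub_eq hint, sub_self, zero_mul, add_zero]
    exact setIntegral_nonpos measurableSet_Ico fun x hx =>
      sub_nonpos.2 (hx.2.le.trans (le_barycenter hint w₂))
  rcases measureReal_nonneg.eq_or_lt with h0 | hpos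
  · rw [barycenter_of_measureReal_eq_zero h0.symm]
    exact hw.trans (le_barycenter hint w₂)
  · exact sub_nonpos.1 (nonpos_of_mul_nonpos_left hneg hpos)

lemma integral_max_sub_zero_eq (c : ℝ) :
    ∫ x, max (x - c) 0 ∂μ = (barycenter μ c - c) * μ.real (Ici c) := by
  rw [← setIntegral_Ici_sub_eq hint, ← integral_indicator measurableSet_Ici]
  congr 1
  funext x
  by_cases hx : c ≤ x
  · simp [indicator, hx]
  · simp [indicator, hx, (not_le.1 hx).le]

end Barycenter

lemma le_measure_Ici_of_forall_lt {μ : Measure ℝ} [IsFiniteMeasure μ] {m : ENNReal} {a : ℝ}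
    (h : ∀ c < a, m ≤ μ (Ici c)) : m ≤ μ (Ici a) := by
  obtain ⟨u, hu_mono, hu_lt, hu_lim⟩ := exists_seq_strictMono_tendsto a
  have hsub : ⋂ n, Ici (u n) ⊆ Ici a := fun x hx =>
    le_of_tendsto' hu_lim fun n => mem_iInter.1 hx n
  calc m ≤ ⨅ n, μ (Ici (u n)) := le_iInf fun n => h _ (hu_lt n)
    _ = μ (⋂ n, Ici (u n)) :=
      (Antitone.measure_iInter (fun _ _ hij => Ici_subset_Ici.2 (hu_mono.monotone hij))
        (fun _ => measurableSet_Ici.nullMeasurableSet) ⟨0, measure_ne_top _ _⟩).symm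
    _ ≤ μ (Ici a) := measure_mono hsub

lemma IsUpperSet.le_measure_of_forall_notMem {μ : Measure ℝ} [IsFiniteMeasure μ]
    [NullSingletonClass μ] {A : Set ℝ} (hA : IsUpperSet A) (hne : A.Nonempty) {m : ENNReal}
    (huniv : m ≤ μ univ) (h : ∀ c ∉ A, m ≤ μ (Ici c)) : m ≤ μ A := by
  by_cases hbdd : BddBelow A
  · have hIoi : Ioi (sInf A) ⊆ A := fun x hx =>
      let ⟨_, ha, hax⟩ := exists_lt_of_csInf_lt hne hx
      hA hax.le ha
    calc m ≤ μ (Ici (sInf A)) :=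
          le_measure_Ici_of_forall_lt fun c hc => h c (notMem_of_lt_csInf hc hbdd)
      _ = μ (Ioi (sInf A)) := (measure_congr Ioi_ae_eq_Ici).symm
      _ ≤ μ A := measure_mono hIoi
  · have hA_univ : A = univ := eq_univ_of_forall fun x =>
      let ⟨_, ha, hax⟩ := not_bddBelow_iff.1 hbdd x
      hA hax.le ha
    rwa [hA_univ]

namespace RogersAdmissible

variable {μ : Measure ℝ} {π : Measure (ℝ × ℝ)} [IsFiniteMeasure π]

lemma mul_measureReal_le_integral_max_sub_zero (hπ : RogersAdmissible μ π) {l : ℝ} (hl : 0 ≤ l)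
    (c : ℝ) : (l - c) * π.real {p | l ≤ p.2} ≤ ∫ x, max (x - c) 0 ∂μ := by
  obtain ⟨hint, -, -, htail, hmap⟩ := hπ
  set S := {p : ℝ × ℝ | l ≤ p.2}
  have hint_sub : Integrable (fun p : ℝ × ℝ => p.1 - c) π := hint.sub (integrable_const c)
  calc (l - c) * π.real S = l * π.real S - ∫ _ in S, c ∂π := by
        rw [setIntegral_const, smul_eq_mul]; ring
    _ ≤ (∫ p in S, p.1 ∂π) - ∫ _ in S, c ∂π := sub_le_sub_right (htail l hl) _
    _ = ∫ p in S, (p.1 - c) ∂π :=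
        (integral_sub hint.integrableOn (integrableOn_const (measure_ne_top _ _))).symm
    _ ≤ ∫ p in S, max (p.1 - c) 0 ∂π :=
        integral_mono hint_sub.integrableOn hint_sub.pos_part.integrableOn
          fun _ => le_max_left _ _
    _ ≤ ∫ p, max (p.1 - c) 0 ∂π :=
        setIntegral_le_integral hint_sub.pos_part (ae_of_all _ fun _ => le_max_right _ _)
    _ = ∫ x, max (x - c) 0 ∂μ := by
        rw [← hmap, integral_map measurable_fst.aemeasurable (by fun_prop)]

lemma measure_le_measure_Ici_of_barycenter_lt [IsFiniteMeasure μ] (hπ : RogersAdmissible μ π)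
    (hint : Integrable (fun x : ℝ => x) μ) {l c : ℝ} (hl : 0 ≤ l) (hc : barycenter μ c < l) :
    π {p | l ≤ p.2} ≤ μ (Ici c) := by
  have hcl : 0 < l - c := sub_pos.2 ((le_barycenter hint c).trans_lt hc)
  have hmul : (l - c) * π.real {p | l ≤ p.2} ≤ (l - c) * μ.real (Ici c) :=
    calc (l - c) * π.real {p | l ≤ p.2} ≤ ∫ x, max (x - c) 0 ∂μ :=
          hπ.mul_measureReal_le_integral_max_sub_zero hl c
      _ = (barycenter μ c - c) * μ.real (Ici c) := integral_max_sub_zero_eq hint c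
      _ ≤ (l - c) * μ.real (Ici c) := by gcongr
  exact (ENNReal.toReal_le_toReal (measure_ne_top _ _) (measure_ne_top _ _)).1
    (le_of_mul_le_mul_left hmul hcl)

end RogersAdmissible

/-- the Azéma–Yor tail bound for the running maximum. -/
theorem azemaYor_tail_bound (μ : Measure ℝ) [IsProbabilityMeasure μ] [NullSingletonClass μ]
    (hμ : Centred μ)
    (π : Measure (ℝ × ℝ)) [IsProbabilityMeasure π] (hπ : RogersAdmissible μ π)
    (l : ℝ) (hl : 0 < l) :
    π (univ ×ˢ Ici l) ≤ μ {x : ℝ | l ≤ barycenter μ x} ∧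
      Measure.map (fun w : ℝ => (w, barycenter μ w)) μ (univ ×ˢ Ici l) =
        μ {x : ℝ | l ≤ barycenter μ x} := by
  have hmono := monotone_barycenter hμ.1
  have hpreimage : univ ×ˢ Ici l = {p : ℝ × ℝ | l ≤ p.2} := by ext; simp
  constructor
  · rw [hpreimage]
    refine IsUpperSet.le_measure_of_forall_notMem (fun a b hab ha => ha.trans (hmono hab))
      ⟨l, le_barycenter hμ.1 l⟩ (prob_le_one.trans_eq measure_univ.symm) fun c hc => ?_
    exact hπ.measure_le_measure_Ici_of_barycenter_lt hμ.1 hl.le (not_le.1 hc)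
  · have hmeas : Measurable fun w : ℝ => (w, barycenter μ w) :=
      measurable_id.prodMk hmono.measurable
    rw [Measure.map_apply hmeas (MeasurableSet.univ.prod measurableSet_Ici), hpreimage]
    rfl
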